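/- Let M be a positive integer and let X and Y be disjoint subsets of {1, …, M} such that #X = #Y + l with l ≥ 0 a natural number. Then for every natural number k₁, the following identity holds in ℚ(q): the sum, over all ordered partitions of X into subsets X₁ and X₂ with #X₁ = k₁, of q^{d(X₁,X₂) + d(Y,X₁)}, equals the sum over all natural numbers j₂ (equivalently, over 0 ≤ j₂ ≤ k₁, since all other terms vanish) of ⟨l choose k₁−j₂, l−k₁+j₂⟩_q times the sum, over all ordered partitions of Y into subsets Y₁ and Y₂ with #Y₂ = j₂, of q^{d(Y₁,Y₂) + d(Y₂,X)}. -/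

import Mathlib

/-!
Both sides are coefficients of `t^k₁`: the claim is the identity of generating series
`xSplitSeries X Y = qChooseSeries (#X - #Y) * ySplitSeries X Y`, where the split series collect
the splittings of `X`, resp. `Y`, by size and `qChooseSeries l = ∑ₖ [l choose k]_q tᵏ`.
Induct on `X ∪ Y`, adding a new largest element `a`. If `a` joins `X`, then `xSplitSeries`
becomes `(1 + q^{#Y-#X} t) · xSplitSeries(qt)` and `ySplitSeries` becomes `ySplitSeries(qt)`;
if `a` joins `Y`, then `xSplitSeries` becomes `xSplitSeries(t/q)` and `ySplitSeries` becomes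
`(1 + q^{#Y-#X} t) · ySplitSeries(t/q)`. In both cases the factors match by the q-Pascal rule
`qChooseSeries (l + 1) (t) = (1 + q^{-l} t) · qChooseSeries l (qt)`.
-/

noncomputable section

/-- The indeterminate `q` in the field `ℚ(q)` of rational functions over `ℚ`. -/
def q : RatFunc ℚ := RatFunc.X

/-- The balanced quantum integer `[n]_q = (q^n - q^{-n})/(q - q^{-1})`. -/
def qInt (n : ℕ) : RatFunc ℚ := (q ^ (n : ℤ) - q ^ (-(n : ℤ))) / (q - q⁻¹)

/-- The quantum factorial `[n]_q! = ∏_{j=1}^n [j]_q`. -/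
def qFact (n : ℕ) : RatFunc ℚ := ∏ j ∈ Finset.range n, qInt (j + 1)

/-- The balanced quantum binomial `⟨a+b choose a,b⟩_q`, defined for integers `a`, `b`:
it is `0` if `a < 0` or `b < 0`, and `[a+b]_q! / ([a]_q! · [b]_q!)` otherwise. -/
def qBinom (a b : ℤ) : RatFunc ℚ :=
  if a < 0 ∨ b < 0 then 0 else qFact (a + b).toNat / (qFact a.toNat * qFact b.toNat)

/-- The degree `d(Y,Z) = #{(y,z) ∈ Y × Z : y < z} − #{(y,z) ∈ Y × Z : y > z}`
of a pair of (disjoint) finite sets of integers. -/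
def deg (Y Z : Finset ℤ) : ℤ :=
  (((Y ×ˢ Z).filter fun p => p.1 < p.2).card : ℤ) -
    (((Y ×ˢ Z).filter fun p => p.2 < p.1).card : ℤ)

open Finset PowerSeries

theorem Finset.sum_powersetCard_succ_insert {α β : Type*} [DecidableEq α] [AddCommMonoid β]
    {a : α} {s : Finset α} (ha : a ∉ s) (n : ℕ) (f : Finset α → β) :
    ∑ t ∈ (insert a s).powersetCard (n + 1), f t =
      ∑ t ∈ s.powersetCard (n + 1), f t + ∑ t ∈ s.powersetCard n, f (insert a t) := by
  rw [powersetCard_succ_insert ha, sum_union, sum_image]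
  · exact insert_erase_invOn.2.injOn.mono fun t ht ↦ notMem_mono (mem_powersetCard.1 ht).1 ha
  · aesop (add simp [disjoint_left, insert_subset_iff, mem_powersetCard])

namespace PowerSeries

variable {R : Type*} [CommSemiring R]

lemma rescale_C (a c : R) : rescale a (C c) = C c := by
  ext (_ | n) <;> simp [coeff_C]

lemma coeff_zero_one_add_C_mul_X_mul (c : R) (f : R⟦X⟧) :
    coeff 0 ((1 + C c * X) * f) = coeff 0 f := by
  simp

lemma coeff_succ_one_add_C_mul_X_mul (c : R) (f : R⟦X⟧) (n : ℕ) :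
    coeff (n + 1) ((1 + C c * X) * f) = coeff (n + 1) f + c * coeff n f := by
  rw [add_mul, one_mul, map_add, mul_assoc, coeff_C_mul, coeff_succ_X_mul]

end PowerSeries

lemma q_ne_zero : q ≠ 0 := RatFunc.X_ne_zero

lemma q_zpow_ne_one {m : ℤ} (hm : m ≠ 0) : q ^ m ≠ 1 := by
  classical
  intro h
  have h' := congrArg (RatFunc.inftyValuation ℚ) h
  rw [q, RatFunc.inftyValuation.X_zpow, map_one] at h'
  exact hm (by simpa using h')

lemma q_zpow_sub_zpow_neg_ne_zero {n : ℤ} (hn : n ≠ 0) : q ^ n - q ^ (-n) ≠ 0 := by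
  rw [sub_ne_zero]
  intro h
  apply q_zpow_ne_one (m := n + n) (by omega)
  rw [zpow_add₀ q_ne_zero]
  nth_rw 2 [h]
  rw [← zpow_add₀ q_ne_zero, add_neg_cancel, zpow_zero]

lemma q_zpow_add_natCast (m : ℤ) (n : ℕ) : q ^ (m + n) = q ^ n * q ^ m := by
  rw [zpow_add₀ q_ne_zero, zpow_natCast, mul_comm]

lemma q_zpow_sub_natCast (m : ℤ) (n : ℕ) : q ^ (m - n) = q⁻¹ ^ n * q ^ m := by
  rw [zpow_sub₀ q_ne_zero, zpow_natCast, inv_pow, div_eq_inv_mul]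

def qIntZ (n : ℤ) : RatFunc ℚ := (q ^ n - q ^ (-n)) / (q - q⁻¹)

@[simp] lemma qIntZ_zero : qIntZ 0 = 0 := by simp [qIntZ]

lemma qIntZ_add (a b : ℤ) : qIntZ (a + b) = q ^ (-b) * qIntZ a + q ^ a * qIntZ b := by
  simp only [qIntZ, neg_add, zpow_add₀ q_ne_zero]
  ring

lemma qIntZ_ne_zero {n : ℤ} (hn : n ≠ 0) : qIntZ n ≠ 0 := by
  refine div_ne_zero (q_zpow_sub_zpow_neg_ne_zero hn) ?_
  simpa using q_zpow_sub_zpow_neg_ne_zero (n := 1) one_ne_zero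

lemma qFact_succ (k : ℕ) : qFact (k + 1) = qFact k * qIntZ (k + 1) := by
  rw [qFact, prod_range_succ, ← qFact]
  exact_mod_cast rfl

lemma qFact_ne_zero (n : ℕ) : qFact n ≠ 0 :=
  prod_ne_zero_iff.mpr fun i _ => by exact_mod_cast qIntZ_ne_zero (n := i + 1) (by omega)

-- The top entry is an integer because the induction needs it to be `#X - #Y`.
def qChoose (l : ℤ) (k : ℕ) : RatFunc ℚ := (∏ i ∈ range k, qIntZ (l - i)) / qFact k

@[simp] lemma qChoose_zero (l : ℤ) : qChoose l 0 = 1 := by simp [qChoose, qFact]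

lemma qChoose_succ_succ (l : ℤ) (k : ℕ) :
    qChoose (l + 1) (k + 1) =
      q ^ ((k : ℤ) + 1) * qChoose l (k + 1) + q ^ (k - l) * qChoose l k := by
  have hprod : ∏ i ∈ range (k + 1), qIntZ (l + 1 - i) =
      (∏ i ∈ range k, qIntZ (l - i)) * qIntZ (l + 1) := by
    rw [prod_range_succ']
    push_cast
    simp only [add_sub_add_right_eq_sub, sub_zero]
  have hsplit :
      qIntZ (l + 1) = q ^ ((k : ℤ) + 1) * qIntZ (l - k) + q ^ (k - l) * qIntZ (k + 1) := by
    have h := qIntZ_add (k + 1) (l - k)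
    rw [show (k : ℤ) + 1 + (l - k) = l + 1 by ring, neg_sub] at h
    rw [h, add_comm]
  simp only [qChoose, hprod, prod_range_succ _ k, qFact_succ, hsplit]
  have := qFact_ne_zero k
  have := qIntZ_ne_zero (n := k + 1) (by omega)
  field_simp

lemma prod_qIntZ_sub_mul_qFact {n k : ℕ} (h : k ≤ n) :
    (∏ i ∈ range k, qIntZ ((n : ℤ) - i)) * qFact (n - k) = qFact n := by
  induction k with
  | zero => simp
  | succ k ih =>
    have hfact : qFact (n - k) = qFact (n - (k + 1)) * qIntZ ((n : ℤ) - k) := by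
      rw [show n - k = n - (k + 1) + 1 by omega, qFact_succ]
      congr 2
      omega
    rw [← ih (by omega), hfact, prod_range_succ]
    ring

lemma qChoose_natCast (n k : ℕ) : qChoose n k = qBinom k ((n : ℤ) - k) := by
  rcases le_or_gt k n with h | h
  · rw [qBinom, if_neg (by omega), show ((k : ℤ) + (n - k)).toNat = n by omega,
      show ((n : ℤ) - k).toNat = n - k by omega, Int.toNat_natCast, qChoose,
      ← prod_qIntZ_sub_mul_qFact h, mul_comm (qFact k), ← div_div,
      mul_div_cancel_right₀ _ (qFact_ne_zero _)]
  · rw [qBinom, if_pos (by omega), qChoose, prod_eq_zero (mem_range.2 h) (by simp), zero_div]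

def qChooseSeries (l : ℤ) : (RatFunc ℚ)⟦X⟧ := mk (qChoose l)

lemma qChooseSeries_zero : qChooseSeries 0 = 1 := by
  ext (_ | k)
  · simp [qChooseSeries]
  · simp [qChooseSeries, qChoose, prod_range_succ']

lemma qChooseSeries_succ (l : ℤ) :
    qChooseSeries (l + 1) = (1 + C (q ^ (-l)) * X) * rescale q (qChooseSeries l) := by
  ext (_ | k)
  · rw [coeff_zero_one_add_C_mul_X_mul, coeff_rescale]
    simp [qChooseSeries]
  · rw [coeff_succ_one_add_C_mul_X_mul, coeff_rescale, coeff_rescale]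
    simp only [qChooseSeries, coeff_mk, qChoose_succ_succ]
    rw [← zpow_natCast, ← zpow_natCast, ← mul_assoc, ← zpow_add₀ q_ne_zero, Nat.cast_succ,
      neg_add_eq_sub]

lemma rescale_inv_qChooseSeries (l : ℤ) :
    rescale q⁻¹ (qChooseSeries l) = (1 + C (q ^ (-l)) * X) * qChooseSeries (l - 1) := by
  conv_lhs => rw [← sub_add_cancel l 1, qChooseSeries_succ]
  rw [map_mul, rescale_rescale, mul_inv_cancel₀ q_ne_zero, rescale_one, RingHom.id_apply,
    map_add, map_one, map_mul, rescale_X, rescale_C, ← mul_assoc, ← map_mul, ← zpow_neg_one,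
    ← zpow_add₀ q_ne_zero, neg_sub, show 1 - l + -1 = -l by ring]

lemma deg_eq_sum_sign (A B : Finset ℤ) : deg A B = ∑ x ∈ A, ∑ y ∈ B, Int.sign (y - x) := by
  simp only [deg, card_filter, Nat.cast_sum, Nat.cast_ite, Nat.cast_one, Nat.cast_zero,
    ← sum_sub_distrib, sum_product]
  refine sum_congr rfl fun x _ => sum_congr rfl fun y _ => ?_
  rcases lt_trichotomy x y with h | rfl | h
  · simp [h, h.not_gt, Int.sign_eq_one_of_pos (sub_pos.2 h)]
  · simp
  · simp [h, h.not_gt, Int.sign_eq_neg_one_of_neg (sub_neg.2 h)]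

lemma deg_insert_right_of_lt {a : ℤ} {A B : Finset ℤ} (hA : ∀ x ∈ A, x < a) (haB : a ∉ B) :
    deg A (insert a B) = deg A B + #A := by
  simp only [deg_eq_sum_sign, sum_insert haB, sum_add_distrib, add_comm (Int.sign _)]
  rw [sum_congr rfl fun x hx => Int.sign_eq_one_of_pos (sub_pos.2 (hA x hx))]
  simp

lemma deg_insert_left_of_lt {a : ℤ} {A B : Finset ℤ} (hB : ∀ y ∈ B, y < a) (haA : a ∉ A) :
    deg (insert a A) B = deg A B - #B := by
  simp only [deg_eq_sum_sign, sum_insert haA]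
  rw [sum_congr rfl fun y hy => Int.sign_eq_neg_one_of_neg (sub_neg.2 (hB y hy)), sum_const,
    smul_neg, nsmul_one, neg_add_eq_sub]

def xSplitSeries (X Y : Finset ℤ) : (RatFunc ℚ)⟦X⟧ :=
  mk fun k => ∑ X₁ ∈ X.powersetCard k, q ^ (deg X₁ (X \ X₁) + deg Y X₁)

def ySplitSeries (X Y : Finset ℤ) : (RatFunc ℚ)⟦X⟧ :=
  mk fun j => ∑ Y₂ ∈ Y.powersetCard j, q ^ (deg (Y \ Y₂) Y₂ + deg Y₂ X)

section InsertMax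

variable {a : ℤ} {X Y : Finset ℤ}

lemma xSplitSeries_insert_left (ha : ∀ b ∈ X ∪ Y, b < a) :
    xSplitSeries (insert a X) Y =
      (1 + C (q ^ ((#Y : ℤ) - #X)) * PowerSeries.X) * rescale q (xSplitSeries X Y) := by
  have haX : a ∉ X := fun h => (ha a (mem_union_left Y h)).false
  have hX : ∀ x ∈ X, x < a := fun x hx => ha x (mem_union_left Y hx)
  ext (_ | k)
  · rw [coeff_zero_one_add_C_mul_X_mul, coeff_rescale]
    simp [xSplitSeries, deg]
  rw [coeff_succ_one_add_C_mul_X_mul, coeff_rescale, coeff_rescale]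
  simp only [xSplitSeries, coeff_mk, sum_powersetCard_succ_insert haX, mul_sum]
  congr 1
  · refine sum_congr rfl fun X₁ hX₁ => ?_
    obtain ⟨hsub, hcard⟩ := mem_powersetCard.1 hX₁
    rw [insert_sdiff_of_notMem _ fun h => haX (hsub h),
      deg_insert_right_of_lt (fun x hx => hX x (hsub hx)) (fun h => haX (sdiff_subset h)),
      hcard, ← q_zpow_add_natCast, add_right_comm]
  · refine sum_congr rfl fun X₁ hX₁ => ?_
    obtain ⟨hsub, hcard⟩ := mem_powersetCard.1 hX₁
    have hk : k ≤ #X := hcard ▸ card_le_card hsub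
    rw [insert_sdiff_insert, sdiff_insert_of_notMem haX,
      deg_insert_left_of_lt (fun x hx => hX x (sdiff_subset hx)) (fun h => haX (hsub h)),
      deg_insert_right_of_lt (fun y hy => ha y (mem_union_right X hy)) (fun h => haX (hsub h)),
      card_sdiff_of_subset hsub, hcard, ← q_zpow_add_natCast, ← zpow_add₀ q_ne_zero]
    congr 1
    omega

lemma ySplitSeries_insert_left (ha : ∀ b ∈ X ∪ Y, b < a) :
    ySplitSeries (insert a X) Y = rescale q (ySplitSeries X Y) := by
  have haX : a ∉ X := fun h => (ha a (mem_union_left Y h)).false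
  ext j
  simp only [ySplitSeries, coeff_rescale, coeff_mk, mul_sum]
  refine sum_congr rfl fun Y₂ hY₂ => ?_
  obtain ⟨hsub, hcard⟩ := mem_powersetCard.1 hY₂
  rw [deg_insert_right_of_lt (fun y hy => ha y (mem_union_right X (hsub hy))) haX, hcard,
    ← q_zpow_add_natCast, add_assoc]

lemma xSplitSeries_insert_right (ha : ∀ b ∈ X ∪ Y, b < a) :
    xSplitSeries X (insert a Y) = rescale q⁻¹ (xSplitSeries X Y) := by
  have haY : a ∉ Y := fun h => (ha a (mem_union_right X h)).false
  ext k
  simp only [xSplitSeries, coeff_rescale, coeff_mk, mul_sum]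
  refine sum_congr rfl fun X₁ hX₁ => ?_
  obtain ⟨hsub, hcard⟩ := mem_powersetCard.1 hX₁
  rw [deg_insert_left_of_lt (fun x hx => ha x (mem_union_left Y (hsub hx))) haY, hcard,
    ← q_zpow_sub_natCast, add_sub_assoc]

lemma ySplitSeries_insert_right (ha : ∀ b ∈ X ∪ Y, b < a) :
    ySplitSeries X (insert a Y) =
      (1 + C (q ^ ((#Y : ℤ) - #X)) * PowerSeries.X) * rescale q⁻¹ (ySplitSeries X Y) := by
  have haY : a ∉ Y := fun h => (ha a (mem_union_right X h)).false
  have hY : ∀ y ∈ Y, y < a := fun y hy => ha y (mem_union_right X hy)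
  ext (_ | j)
  · rw [coeff_zero_one_add_C_mul_X_mul, coeff_rescale]
    simp [ySplitSeries, deg]
  rw [coeff_succ_one_add_C_mul_X_mul, coeff_rescale, coeff_rescale]
  simp only [ySplitSeries, coeff_mk, sum_powersetCard_succ_insert haY, mul_sum]
  congr 1
  · refine sum_congr rfl fun Y₂ hY₂ => ?_
    obtain ⟨hsub, hcard⟩ := mem_powersetCard.1 hY₂
    rw [insert_sdiff_of_notMem _ fun h => haY (hsub h),
      deg_insert_left_of_lt (fun y hy => hY y (hsub hy)) (fun h => haY (sdiff_subset h)),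
      hcard, ← q_zpow_sub_natCast, sub_add_eq_add_sub]
  · refine sum_congr rfl fun Y₂ hY₂ => ?_
    obtain ⟨hsub, hcard⟩ := mem_powersetCard.1 hY₂
    have hj : j ≤ #Y := hcard ▸ card_le_card hsub
    rw [insert_sdiff_insert, sdiff_insert_of_notMem haY,
      deg_insert_right_of_lt (fun y hy => hY y (sdiff_subset hy)) (fun h => haY (hsub h)),
      deg_insert_left_of_lt (fun x hx => ha x (mem_union_left Y hx)) (fun h => haY (hsub h)),
      card_sdiff_of_subset hsub, hcard, ← q_zpow_sub_natCast, ← zpow_add₀ q_ne_zero]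
    congr 1
    omega

end InsertMax

theorem xSplitSeries_eq_qChooseSeries_mul {X Y : Finset ℤ} (hXY : Disjoint X Y) :
    xSplitSeries X Y = qChooseSeries (#X - #Y) * ySplitSeries X Y := by
  induction hS : X ∪ Y using Finset.induction_on_max generalizing X Y with
  | empty =>
    obtain ⟨rfl, rfl⟩ := union_eq_empty.1 hS
    rw [card_empty, Nat.cast_zero, sub_zero, qChooseSeries_zero, one_mul]
    ext (_ | k) <;> simp [xSplitSeries, ySplitSeries, deg]
  | insert a S hlt ih =>
    have haS : a ∉ S := fun h => (hlt a h).false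
    rcases mem_union.1 (hS ▸ mem_insert_self a S : a ∈ X ∪ Y) with haX | haY
    · obtain ⟨X, haX', rfl⟩ : ∃ X', a ∉ X' ∧ X = insert a X' :=
        ⟨X.erase a, notMem_erase a X, (insert_erase haX).symm⟩
      have hS' : X ∪ Y = S := by
        rw [← erase_insert haS, ← hS, insert_union,
          erase_insert (notMem_union.2 ⟨haX', disjoint_left.1 hXY haX⟩)]
      rw [xSplitSeries_insert_left (hS' ▸ hlt),
        ih (disjoint_of_subset_left (subset_insert a X) hXY) hS', map_mul, ← mul_assoc, ← neg_sub,
        ← qChooseSeries_succ, ← ySplitSeries_insert_left (hS' ▸ hlt), card_insert_of_notMem haX',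
        Nat.cast_succ, sub_add_eq_add_sub]
    · obtain ⟨Y, haY', rfl⟩ : ∃ Y', a ∉ Y' ∧ Y = insert a Y' :=
        ⟨Y.erase a, notMem_erase a Y, (insert_erase haY).symm⟩
      have hS' : X ∪ Y = S := by
        rw [← erase_insert haS, ← hS, union_insert,
          erase_insert (notMem_union.2 ⟨disjoint_right.1 hXY haY, haY'⟩)]
      rw [xSplitSeries_insert_right (hS' ▸ hlt),
        ih (disjoint_of_subset_right (subset_insert a Y) hXY) hS', map_mul,
        rescale_inv_qChooseSeries, ySplitSeries_insert_right (hS' ▸ hlt),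
        card_insert_of_notMem haY', Nat.cast_succ, ← sub_sub, neg_sub]
      ring

theorem key_lemma_general (X Y : Finset ℤ)
    (hXY : Disjoint X Y) (l : ℕ) (hcard : X.card = Y.card + l) (k₁ : ℕ) :
    ∑ X₁ ∈ X.powersetCard k₁, q ^ (deg X₁ (X \ X₁) + deg Y X₁) =
      ∑ j₂ ∈ Finset.range (k₁ + 1),
        qBinom ((k₁ : ℤ) - (j₂ : ℤ)) ((l : ℤ) - (k₁ : ℤ) + (j₂ : ℤ)) *
          ∑ Y₂ ∈ Y.powersetCard j₂, q ^ (deg (Y \ Y₂) Y₂ + deg Y₂ X) := by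
  have h := congrArg (coeff k₁) (xSplitSeries_eq_qChooseSeries_mul hXY)
  rw [mul_comm, coeff_mul, Nat.sum_antidiagonal_eq_sum_range_succ_mk] at h
  simp only [xSplitSeries, ySplitSeries, qChooseSeries, coeff_mk] at h
  rw [h]
  refine sum_congr rfl fun j hj => ?_
  have hj : j ≤ k₁ := Nat.lt_succ_iff.1 (mem_range.1 hj)
  rw [mul_comm, show (#X : ℤ) - #Y = l by omega, qChoose_natCast]
  congr 2 <;> omega

/-- The key lemma: for disjoint `X, Y ⊆ {1, …, M}` with `#X = #Y + l` and any `k₁`,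
`∑_{X = X₁ ⊔ X₂, #X₁ = k₁} q^{d(X₁,X₂) + d(Y,X₁)}
  = ∑_{j₂} ⟨l choose k₁−j₂, l−k₁+j₂⟩_q ∑_{Y = Y₁ ⊔ Y₂, #Y₂ = j₂} q^{d(Y₁,Y₂) + d(Y₂,X)}`,
where all terms with `j₂ > k₁` vanish, so the sum over `j₂` runs over `0 ≤ j₂ ≤ k₁`. -/
theorem key_lemma (M : ℕ) (hM : 0 < M) (X Y : Finset ℤ)
    (hX : X ⊆ Finset.Icc 1 (M : ℤ)) (hY : Y ⊆ Finset.Icc 1 (M : ℤ))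
    (hXY : Disjoint X Y) (l : ℕ) (hcard : X.card = Y.card + l) (k₁ : ℕ) :
    ∑ X₁ ∈ X.powersetCard k₁, q ^ (deg X₁ (X \ X₁) + deg Y X₁) =
      ∑ j₂ ∈ Finset.range (k₁ + 1),
        qBinom ((k₁ : ℤ) - (j₂ : ℤ)) ((l : ℤ) - (k₁ : ℤ) + (j₂ : ℤ)) *
          ∑ Y₂ ∈ Y.powersetCard j₂, q ^ (deg (Y \ Y₂) Y₂ + deg Y₂ X) :=
  key_lemma_general X Y hXY l hcard k₁
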